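/- arXiv:2409.18650 — 5 statements merged into one kernel-verified Lean document; each statement's English description precedes it below -/
import Mathlib

section
/- The function f : c_c → ℝ defined by f(x) = Σ_{n=1}^∞ (n²/2)(x_n − n^{-2})² is discontinuous at every point of c_c with respect to the ℓ² norm. -/
/-!
If `x` has finite support then `x n = 0` for all large `n`. Setting that coordinate to
`1 / (n + 1)` moves `x` by only `1 / (n + 1)` in `ℓ²`, but the corresponding summand of `f`
has weight `(n + 1)² / 2` and changes by `1 / 2 - 1 / (n + 1)`. So along a sequence converging
to `x` the values of `f` tend to `f x + 1 / 2`.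
-/

open scoped ENNReal

noncomputable section

abbrev ell2 : Type := lp (fun _ : ℕ => ℝ) 2

lemma memℓp_of_finite_support {x : ℕ → ℝ} (h : (Function.support x).Finite) :
    Memℓp x 2 := by
  apply memℓp_gen
  apply summable_of_finite_support
  refine h.subset ?_
  intro n hn
  simp only [Function.mem_support] at hn ⊢
  intro h0
  exact hn (by simp [h0])

def ccSubmodule : Submodule ℝ ell2 where
  carrier := {x | (Function.support fun n => (x : ℕ → ℝ) n).Finite}
  add_mem' := by
    intro a b ha hb
    refine Set.Finite.subset (ha.union hb) ?_
    intro n hn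
    simp only [Function.mem_support, Set.mem_union] at hn ⊢
    by_contra h
    push_neg at h
    exact hn (by simp [lp.coeFn_add, h.1, h.2])
  zero_mem' := by
    simp only [Set.mem_setOf_eq]
    convert Set.finite_empty
    ext n
    simp [lp.coeFn_zero]
  smul_mem' := by
    intro c a ha
    refine Set.Finite.subset ha ?_
    intro n hn
    simp only [Function.mem_support] at hn ⊢
    intro h
    exact hn (by simp [lp.coeFn_smul, h])

abbrev cc : Type := ccSubmodule

def seqOf (x : cc) : ℕ → ℝ := fun n => ((x : ell2) : ℕ → ℝ) n

def fSeq (x : ℕ → ℝ) : ℝ :=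
  ∑' n : ℕ, (((n : ℝ) + 1) ^ 2 / 2) * (x n - (((n : ℝ) + 1) ^ 2)⁻¹) ^ 2

def fcc (x : cc) : ℝ := fSeq (seqOf x)

/-- The standard unit sequence `e_n` as an element of `c_c`. -/
def eVec (n : ℕ) : cc :=
  ⟨lp.single 2 n (1 : ℝ), by
    refine Set.Finite.subset (Set.finite_singleton n) ?_
    intro m hm
    simp only [Function.mem_support] at hm
    by_contra hmn
    exact hm (lp.single_apply_ne 2 n _ (by simpa using hmn))⟩

/-- The backward-difference operation on raw sequences, with `x_{-1} := 0`. -/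
def Aseq (x : ℕ → ℝ) : ℕ → ℝ := fun n => x n - (if n = 0 then 0 else x (n - 1))

lemma support_Aseq {x : ℕ → ℝ} (h : (Function.support x).Finite) :
    (Function.support (Aseq x)).Finite := by
  refine Set.Finite.subset (h.union (h.image (· + 1))) ?_
  intro n hn
  simp only [Function.mem_support, Aseq] at hn
  by_contra hc
  simp only [Set.mem_union, Function.mem_support, Set.mem_image, not_or, not_exists] at hc
  obtain ⟨h1, h2⟩ := hc
  apply hn
  rcases n with _ | m
  · simpa using h1
  · have hx1 : x (m + 1) = 0 := not_not.mp h1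
    have hx : x m = 0 := by
      by_contra hxm
      exact (h2 m ⟨hxm, rfl⟩).elim
    simp [hx1, hx]

lemma mem_ccSubmodule_of_mk {x : ℕ → ℝ} (hx : Memℓp x 2)
    (h : (Function.support x).Finite) : (⟨x, hx⟩ : ell2) ∈ ccSubmodule := h

/-- The operator `A : c_c → c_c`, `(Ax)_n = x_n - x_{n-1}` (with `x_{-1} := 0`). -/
def Aop (x : cc) : cc :=
  ⟨⟨Aseq (seqOf x), memℓp_of_finite_support (support_Aseq x.2)⟩,
    mem_ccSubmodule_of_mk _ (support_Aseq x.2)⟩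

/-- The Fenchel conjugate of `f`, as a function on `ℓ²`. -/
def fstar (y : ell2) : ℝ :=
  ∑' n : ℕ, (((n : ℝ) + 1) ^ 2)⁻¹ *
    ((1 / 2) * ((y : ℕ → ℝ) n) ^ 2 + (y : ℕ → ℝ) n)

/-- The (formal) adjoint of `A`, acting on `ℓ²` sequences:
`(A*y)_n = y_n - y_{n+1}`. -/
def AstarSeq (y : ell2) : ℕ → ℝ := fun n => (y : ℕ → ℝ) n - (y : ℕ → ℝ) (n + 1)

open Filter Topology

-- The `n`-th summand of `fSeq`; index `n` stands for the paper's coordinate `n + 1`.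
def fTerm (n : ℕ) (s : ℝ) : ℝ := (((n : ℝ) + 1) ^ 2 / 2) * (s - (((n : ℝ) + 1) ^ 2)⁻¹) ^ 2

lemma fSeq_eq_tsum_fTerm (x : ℕ → ℝ) : fSeq x = ∑' n, fTerm n (x n) := rfl

lemma fTerm_zero (n : ℕ) : fTerm n 0 = (2 * ((n : ℝ) + 1) ^ 2)⁻¹ := by
  have : (n : ℝ) + 1 ≠ 0 := by positivity
  simp only [fTerm]
  field_simp
  ring

lemma fTerm_inv_sub_fTerm_zero (n : ℕ) :
    fTerm n ((n : ℝ) + 1)⁻¹ - fTerm n 0 = 1 / 2 - ((n : ℝ) + 1)⁻¹ := by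
  have : (n : ℝ) + 1 ≠ 0 := by positivity
  simp only [fTerm]
  field_simp
  ring

lemma summable_fTerm_zero : Summable fun n : ℕ => fTerm n 0 := by
  have h := (summable_nat_add_iff 1).mpr (Real.summable_nat_pow_inv.mpr one_lt_two)
  refine (h.mul_left 2⁻¹).congr fun n => ?_
  rw [fTerm_zero, mul_inv]
  push_cast
  rfl

lemma summable_fTerm_of_finite_support {x : ℕ → ℝ} (hx : (Function.support x).Finite) :
    Summable fun n => fTerm n (x n) :=
  summable_fTerm_zero.congr_cofinite <| hx.eventually_cofinite_notMem.mono fun n hn => by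
    simp [Function.notMem_support.mp hn]

lemma fSeq_update {x : ℕ → ℝ} (hx : Summable fun n => fTerm n (x n)) (n : ℕ) (t : ℝ) :
    fSeq (Function.update x n t) = fSeq x + (fTerm n t - fTerm n (x n)) := by
  have h_terms : (fun m => fTerm m (Function.update x n t m)) =
      Function.update (fun m => fTerm m (x m)) n (fTerm n t) := by
    ext m
    by_cases hm : m = n
    · subst hm; simp
    · simp [hm]
  rw [fSeq_eq_tsum_fTerm, fSeq_eq_tsum_fTerm, h_terms, (hx.hasSum.update n (fTerm n t)).tsum_eq]
  ring

lemma seqOf_add_smul_eVec (x : cc) (c : ℝ) (n : ℕ) :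
    seqOf (x + c • eVec n) = Function.update (seqOf x) n (seqOf x n + c) := by
  ext m
  have h_coord : seqOf (x + c • eVec n) m = seqOf x m + c * (Pi.single n 1 : ℕ → ℝ) m := rfl
  rw [h_coord]
  by_cases hm : m = n
  · subst hm; simp
  · simp [hm]

lemma norm_eVec (n : ℕ) : ‖eVec n‖ = 1 := by
  show ‖lp.single (E := fun _ : ℕ => ℝ) 2 n 1‖ = 1
  rw [lp.norm_single (by norm_num), norm_one]

lemma tendsto_inv_natCast_add_one : Tendsto (fun n : ℕ => ((n : ℝ) + 1)⁻¹) atTop (𝓝 0) := by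
  simpa using tendsto_one_div_add_atTop_nhds_zero_nat (𝕜 := ℝ)

lemma tendsto_add_inv_smul_eVec (x : cc) :
    Tendsto (fun n : ℕ => x + ((n : ℝ) + 1)⁻¹ • eVec n) atTop (𝓝 x) := by
  have h : Tendsto (fun n : ℕ => ((n : ℝ) + 1)⁻¹ • eVec n) atTop (𝓝 0) := by
    rw [tendsto_zero_iff_norm_tendsto_zero]
    refine tendsto_inv_natCast_add_one.congr fun n => ?_
    rw [norm_smul, norm_eVec, mul_one, Real.norm_of_nonneg (by positivity)]
  simpa using tendsto_const_nhds.add h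

lemma seqOf_eventually_eq_zero (x : cc) : ∀ᶠ n in atTop, seqOf x n = 0 := by
  rw [← Nat.cofinite_eq_atTop]
  exact x.2.eventually_cofinite_notMem.mono fun n hn => Function.notMem_support.mp hn

lemma fcc_add_inv_smul_eVec_eventuallyEq (x : cc) :
    (fun n : ℕ => fcc (x + ((n : ℝ) + 1)⁻¹ • eVec n)) =ᶠ[atTop]
      fun n => fcc x + (1 / 2 - ((n : ℝ) + 1)⁻¹) := by
  filter_upwards [seqOf_eventually_eq_zero x] with n hn
  rw [fcc, fcc, seqOf_add_smul_eVec,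
    fSeq_update (x := seqOf x) (summable_fTerm_of_finite_support x.2), hn, zero_add,
    fTerm_inv_sub_fTerm_zero]

/-- `f` is discontinuous at every point of `c_c`. -/
theorem f_nowhere_continuous : ∀ x : cc, ¬ ContinuousAt fcc x := by
  intro x hx
  have h_cont := hx.tendsto.comp (tendsto_add_inv_smul_eVec x)
  have h_jump : Tendsto (fun n : ℕ => fcc (x + ((n : ℝ) + 1)⁻¹ • eVec n)) atTop
      (𝓝 (fcc x + (1 / 2 - 0))) :=
    (tendsto_const_nhds.add (tendsto_const_nhds.sub tendsto_inv_natCast_add_one)).congr'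
      (fcc_add_inv_smul_eVec_eventuallyEq x).symm
  have h_limits_eq := tendsto_nhds_unique h_cont h_jump
  linarith
end
end

section
/- The conclusion of the Brøndsted–Rockafellar theorem fails on incomplete spaces: the function f : c_c → ℝ, f(x) = Σ (n²/2)(x_n − n^{-2})², is proper, convex and lower semicontinuous, yet dom(∂f) = ∅ is not dense in dom(f) = c_c. -/
open scoped ENNReal

noncomputable section

def termf (x : ℕ → ℝ) (n : ℕ) : ℝ :=
  (((n : ℝ) + 1) ^ 2 / 2) * (x n - (((n : ℝ) + 1) ^ 2)⁻¹) ^ 2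

lemma fSeq_eq (x : ℕ → ℝ) : fSeq x = ∑' n, termf x n := rfl

lemma termf_nonneg (x : ℕ → ℝ) (n : ℕ) : 0 ≤ termf x n := by
  unfold termf; positivity

lemma summable_baseline : Summable (fun n : ℕ => ((((n : ℝ) + 1) ^ 2)⁻¹) / 2) := by
  have h : Summable (fun n : ℕ => ((n : ℝ)) ^ (-2 : ℝ)) :=
    Real.summable_nat_rpow.mpr (by norm_num)
  have h2 : Summable (fun n : ℕ => (((n : ℝ) + 1)) ^ (-2 : ℝ)) := by
    have := (summable_nat_add_iff 1).mpr h
    simpa using this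
  have h3 : Summable (fun n : ℕ => ((((n : ℝ) + 1) ^ 2)⁻¹)) := by
    refine h2.congr fun n => ?_
    rw [Real.rpow_neg (by positivity), Real.rpow_two]
  exact h3.div_const 2

lemma termf_of_zero {x : ℕ → ℝ} {n : ℕ} (h : x n = 0) :
    termf x n = ((((n : ℝ) + 1) ^ 2)⁻¹) / 2 := by
  have hc : (((n : ℝ) + 1) ^ 2) ≠ 0 := by positivity
  unfold termf
  rw [h]
  field_simp
  ring

lemma summable_termf {x : ℕ → ℝ} (hx : (Function.support x).Finite) :
    Summable (termf x) := by
  have hfin : (Function.support fun n => termf x n - ((((n : ℝ) + 1) ^ 2)⁻¹) / 2).Finite := by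
    refine hx.subset ?_
    intro n hn
    simp only [Function.mem_support] at hn ⊢
    intro h0
    exact hn (by rw [termf_of_zero h0]; ring)
  have := (summable_of_finite_support hfin).add summable_baseline
  refine this.congr fun n => ?_
  ring

lemma summable_termf_cc (x : cc) : Summable (termf (seqOf x)) := summable_termf x.2


lemma seqOf_add (x y : cc) : seqOf (x + y) = fun n => seqOf x n + seqOf y n := by
  funext n
  simp [seqOf, lp.coeFn_add]

lemma seqOf_smul (t : ℝ) (x : cc) : seqOf (t • x) = fun n => t * seqOf x n := by
  funext n
  simp [seqOf, lp.coeFn_smul]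

def indVec (F : Finset ℕ) : cc :=
  ⟨⟨Set.indicator (F : Set ℕ) (fun _ => (1 : ℝ)),
      memℓp_of_finite_support (F.finite_toSet.subset Set.support_indicator_subset)⟩,
    by exact F.finite_toSet.subset Set.support_indicator_subset⟩

lemma seqOf_indVec (F : Finset ℕ) (n : ℕ) :
    seqOf (indVec F) n = if n ∈ F then 1 else 0 := by
  simp [seqOf, indVec, Set.indicator_apply]

lemma norm_indVec (F : Finset ℕ) : ‖indVec F‖ = Real.sqrt F.card := by
  have h2 : (0:ℝ) < (2 : ℝ≥0∞).toReal := by norm_num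
  have key : ‖((indVec F : cc) : ell2)‖ ^ ((2:ℝ≥0∞).toReal) = (F.card : ℝ) := by
    rw [lp.norm_rpow_eq_tsum h2]
    have hcoe : (fun n => ‖(((indVec F : cc) : ell2) : ℕ → ℝ) n‖ ^ ((2:ℝ≥0∞).toReal))
        = fun n => (if n ∈ F then (1:ℝ) else 0) := by
      funext n
      have h := seqOf_indVec F n
      simp only [seqOf] at h
      rw [h]
      by_cases hn : n ∈ F <;> simp [hn]
    rw [hcoe, tsum_eq_sum (s := F) (by intro n hn; simp [hn])]
    simp
  have h2' : (2:ℝ≥0∞).toReal = ((2:ℕ):ℝ) := by norm_num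
  rw [h2', Real.rpow_natCast] at key
  have : ‖indVec F‖ ^ 2 = (F.card : ℝ) := key
  rw [← this, Real.sqrt_sq (norm_nonneg _)]

lemma fcc_eq (x : cc) : fcc x = ∑' n, termf (seqOf x) n := rfl

lemma fcc_perturb (x : cc) (F : Finset ℕ) (hF : ∀ n ∈ F, seqOf x n = 0) (t : ℝ) :
    fcc (x + t • indVec F) =
      fcc x + ∑ n ∈ F, (((n:ℝ)+1)^2/2 * t^2 - t) := by
  have hy : seqOf (x + t • indVec F) = fun n => seqOf x n + t * (if n ∈ F then 1 else 0) := by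
    funext n
    simp only [seqOf_add, seqOf_smul, seqOf_indVec]
  have hterm : ∀ n, termf (seqOf (x + t • indVec F)) n
      = termf (seqOf x) n + (if n ∈ F then (((n:ℝ)+1)^2/2 * t^2 - t) else 0) := by
    intro n
    rw [hy]
    by_cases hn : n ∈ F
    · have hx0 := hF n hn
      simp only [hn, if_true, termf]
      rw [hx0]
      have hc : (((n:ℝ)+1)^2) ≠ 0 := by positivity
      field_simp
      ring
    · simp [hn, termf]
  have hg : Summable (fun n : ℕ => if n ∈ F then (((n:ℝ)+1)^2/2 * t^2 - t) else 0) := by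
    apply summable_of_finite_support
    refine F.finite_toSet.subset ?_
    intro n hn
    simp only [Function.mem_support] at hn
    by_contra h
    simp only [Finset.mem_coe] at h
    simp [h] at hn
  calc fcc (x + t • indVec F)
      = ∑' n, (termf (seqOf x) n + (if n ∈ F then (((n:ℝ)+1)^2/2 * t^2 - t) else 0)) := by
        rw [fcc_eq]; exact tsum_congr hterm
    _ = (∑' n, termf (seqOf x) n) + ∑' n, (if n ∈ F then (((n:ℝ)+1)^2/2 * t^2 - t) else 0) :=
        Summable.tsum_add (summable_termf_cc x) hg
    _ = fcc x + ∑ n ∈ F, (((n:ℝ)+1)^2/2 * t^2 - t) := by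
        have hgs : (∑' n : ℕ, (if n ∈ F then (((n:ℝ)+1)^2/2 * t^2 - t) else 0))
            = ∑ n ∈ F, (((n:ℝ)+1)^2/2 * t^2 - t) := by
          rw [tsum_eq_sum (s := F) (by intro n hn; simp [hn])]
          exact Finset.sum_congr rfl fun n hn => by simp [hn]
        rw [hgs, fcc_eq]

lemma fcc_convex : ConvexOn ℝ (Set.univ : Set cc) fcc := by
  refine ⟨convex_univ, ?_⟩
  intro x _ y _ a b ha hb hab
  have hseq : seqOf (a • x + b • y) = fun n => a * seqOf x n + b * seqOf y n := by
    rw [seqOf_add, seqOf_smul, seqOf_smul]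
  have hterm : ∀ n, termf (seqOf (a • x + b • y)) n
      ≤ a * termf (seqOf x) n + b * termf (seqOf y) n := by
    intro n
    rw [hseq]
    unfold termf
    set c := ((n:ℝ)+1)^2 with hc
    have hcpos : 0 < c := by positivity
    simp only
    have key : a * seqOf x n + b * seqOf y n - c⁻¹
        = a * (seqOf x n - c⁻¹) + b * (seqOf y n - c⁻¹) := by
      have : b = 1 - a := by linarith
      rw [this]; ring
    rw [key]
    set u := seqOf x n - c⁻¹
    set v := seqOf y n - c⁻¹
    have h1 : (a*u+b*v)^2 ≤ a*u^2+b*v^2 := by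
      nlinarith [sq_nonneg (u - v), mul_nonneg ha hb]
    calc c/2 * (a*u+b*v)^2 ≤ c/2 * (a*u^2+b*v^2) :=
          mul_le_mul_of_nonneg_left h1 (by positivity)
      _ = a * (c/2 * u^2) + b * (c/2 * v^2) := by ring
  have hsum1 := summable_termf_cc x
  have hsum2 := summable_termf_cc y
  have hRHS : Summable (fun n => a * termf (seqOf x) n + b * termf (seqOf y) n) :=
    (hsum1.mul_left a).add (hsum2.mul_left b)
  have := Summable.tsum_le_tsum hterm (summable_termf_cc (a • x + b • y)) hRHS
  calc fcc (a • x + b • y) ≤ ∑' n, (a * termf (seqOf x) n + b * termf (seqOf y) n) := this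
    _ = a * fcc x + b * fcc y := by
        rw [Summable.tsum_add (hsum1.mul_left a) (hsum2.mul_left b), tsum_mul_left, tsum_mul_left]
        rfl
    _ = a • fcc x + b • fcc y := rfl

lemma seqOf_sub (x y : cc) : seqOf (x - y) = fun n => seqOf x n - seqOf y n := by
  funext n
  simp [seqOf, lp.coeFn_sub]

lemma seqOf_cont (n : ℕ) : Continuous fun y : cc => seqOf y n := by
  refine (LipschitzWith.of_dist_le_mul (K := 1) fun y z => ?_).continuous
  simp only [NNReal.coe_one, one_mul, dist_eq_norm, Real.norm_eq_abs]
  have h1 : seqOf y n - seqOf z n = seqOf (y - z) n := by rw [seqOf_sub]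
  rw [h1]
  have := lp.norm_apply_le_norm (by norm_num : (2:ℝ≥0∞) ≠ 0) (((y - z : cc)) : ell2) n
  simpa [seqOf] using this

lemma fcc_lsc : LowerSemicontinuous fcc := by
  intro x r hr
  have hsum := summable_termf_cc x
  obtain ⟨N, hN⟩ : ∃ N, r < ∑ n ∈ Finset.range N, termf (seqOf x) n := by
    have h := hsum.hasSum.tendsto_sum_nat
    exact (h.eventually (eventually_gt_nhds hr)).exists
  have hcont : Continuous fun y : cc => ∑ n ∈ Finset.range N, termf (seqOf y) n := by
    apply continuous_finset_sum
    intro n _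
    unfold termf
    have := seqOf_cont n
    fun_prop
  have hev : ∀ᶠ y in nhds x, r < ∑ n ∈ Finset.range N, termf (seqOf y) n :=
    (hcont.tendsto x).eventually (eventually_gt_nhds hN)
  refine hev.mono fun y hy => lt_of_lt_of_le hy ?_
  exact Summable.sum_le_tsum _ (fun n _ => termf_nonneg _ n) (summable_termf_cc y)

lemma subdiff_empty :
    {x : cc | ∃ xs : cc →L[ℝ] ℝ, ∀ y : cc, fcc y ≥ fcc x + xs (y - x)} = ∅ := by
  ext x
  simp only [Set.mem_setOf_eq, Set.mem_empty_iff_false, iff_false, not_exists]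
  intro xs hxs
  obtain ⟨M, hM⟩ := x.2.bddAbove
  have hx0 : ∀ n, M < n → seqOf x n = 0 := by
    intro n hn
    by_contra h
    have hmem : n ∈ Function.support fun m => ((x : ell2) : ℕ → ℝ) m := h
    exact absurd (hM hmem) (by omega)
  set N := ⌈(‖xs‖ + 1) ^ 2⌉₊ with hNdef
  have hN1 : 1 ≤ N := Nat.one_le_ceil_iff.mpr (by positivity)
  have hNge : ((‖xs‖ + 1) ^ 2 : ℝ) ≤ N := Nat.le_ceil _
  set F := Finset.Icc (M + 1) (M + N) with hFdef
  have hcard : F.card = N := by rw [hFdef, Nat.card_Icc]; omega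
  have hFzero : ∀ n ∈ F, seqOf x n = 0 := by
    intro n hn
    rw [hFdef, Finset.mem_Icc] at hn
    exact hx0 n (by omega)
  set S := ∑ n ∈ F, ((n : ℝ) + 1) ^ 2 with hSdef
  have hSpos : 0 < S :=
    Finset.sum_pos (fun n _ => by positivity)
      (Finset.card_pos.mp (by rw [hcard]; omega))
  set t := S⁻¹ with htdef
  have ht : 0 < t := inv_pos.mpr hSpos
  have htS : t * S = 1 := inv_mul_cancel₀ hSpos.ne'
  have hsum : ∑ n ∈ F, (((n : ℝ) + 1) ^ 2 / 2 * t ^ 2 - t) = t ^ 2 / 2 * S - t * N := by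
    have he : ∀ n ∈ F, ((n : ℝ) + 1) ^ 2 / 2 * t ^ 2 = t ^ 2 / 2 * ((n : ℝ) + 1) ^ 2 :=
      fun n _ => by ring
    rw [Finset.sum_sub_distrib, Finset.sum_congr rfl he, ← Finset.mul_sum, Finset.sum_const,
      hcard, nsmul_eq_mul, ← hSdef]
    ring
  have hsub := hxs (x + t • indVec F)
  rw [add_sub_cancel_left, fcc_perturb x F hFzero t, hsum, map_smul, smul_eq_mul] at hsub
  have h1 : t * xs (indVec F) ≤ t ^ 2 / 2 * S - t * N := by linarith
  have h2 : xs (indVec F) ≤ 1 / 2 - N := by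
    have hr : t ^ 2 / 2 * S - t * N = t * (1 / 2 - N) := by
      have : t ^ 2 / 2 * S = t * (t * S) / 2 := by ring
      rw [this, htS]; ring
    rw [hr] at h1
    exact le_of_mul_le_mul_left h1 ht
  have h3 : |xs (indVec F)| ≤ ‖xs‖ * Real.sqrt N := by
    have h := xs.le_opNorm (indVec F)
    rw [norm_indVec, Real.norm_eq_abs] at h
    have : (F.card : ℝ) = (N : ℝ) := by rw [hcard]
    rwa [this] at h
  have hsq : ‖xs‖ + 1 ≤ Real.sqrt N := by
    rw [show (‖xs‖ + 1) = Real.sqrt ((‖xs‖ + 1) ^ 2) from (Real.sqrt_sq (by positivity)).symm]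
    exact Real.sqrt_le_sqrt hNge
  have hs2 : (Real.sqrt N) ^ 2 = (N : ℝ) := Real.sq_sqrt (by positivity)
  nlinarith [neg_abs_le (xs (indVec F)), norm_nonneg xs, h2, h3, hsq, hs2]

/-- `f` is (proper, i.e. real-valued,) convex and lower
semicontinuous, yet `dom ∂f = ∅`, which is not dense in `dom f = c_c`:
the Brøndsted–Rockafellar conclusion fails. -/
theorem brondsted_rockafellar_fails :
    ConvexOn ℝ (Set.univ : Set cc) fcc ∧
    LowerSemicontinuous fcc ∧
    {x : cc | ∃ xs : cc →L[ℝ] ℝ, ∀ y : cc, fcc y ≥ fcc x + xs (y - x)} = ∅ ∧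
    ¬ Dense {x : cc | ∃ xs : cc →L[ℝ] ℝ, ∀ y : cc, fcc y ≥ fcc x + xs (y - x)} := by
  refine ⟨fcc_convex, fcc_lsc, subdiff_empty, ?_⟩
  rw [subdiff_empty]
  intro h
  have := h 0
  rw [closure_empty] at this
  exact this
end
end

section
/- The convex subdifferential sum rule fails on c_c: with g = δ_{{0}} the indicator of {0}, one has ∂(f+g)(0) equal to the whole dual space of c_c (which is nonempty), while ∂f(0) + ∂g(0) = ∅, even though 0 lies in the algebraic interior of dom(f) − dom(g). -/
open scoped ENNReal

noncomputable section

open Classical in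
/-- The indicator function `δ_{0}` with values in the extended reals. -/
def gind : cc → EReal := fun x => if x = 0 then 0 else ⊤

/-! The subgradient inequality `f 0 + φ (t • eₙ) ≤ f (t • eₙ)` is a quadratic inequality in `t`
tangent at `t = 0`, which forces `φ eₙ = -1` for every `n`. A continuous functional cannot take
the value `-1` on every vector of an orthonormal sequence, by Bessel's inequality for functionals,
so `∂f(0) = ∅`. On the other hand `f + δ_{0}` is `+∞` off `0`, so every functional is a
subgradient of it at `0`. -/

open scoped ComplexConjugate in
theorem Orthonormal.sum_norm_sq_apply_le_opNorm_sq {𝕜 E ι : Type*} [RCLike 𝕜]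
    [NormedAddCommGroup E] [InnerProductSpace 𝕜 E] {v : ι → E} (hv : Orthonormal 𝕜 v)
    (φ : E →L[𝕜] 𝕜) (s : Finset ι) : ∑ i ∈ s, ‖φ (v i)‖ ^ 2 ≤ ‖φ‖ ^ 2 := by
  set S := ∑ i ∈ s, ‖φ (v i)‖ ^ 2
  set w := ∑ i ∈ s, conj (φ (v i)) • v i
  have hw : ‖w‖ ^ 2 = S := by
    have := hv.inner_sum (fun i => conj (φ (v i))) (fun i => conj (φ (v i))) s
    rw [inner_self_eq_norm_sq_to_K] at this
    simp only [RCLike.conj_conj, RCLike.mul_conj] at this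
    exact_mod_cast this
  have hφw : φ w = S := by
    simp only [w, S, map_sum, map_smul, smul_eq_mul, RCLike.conj_mul]
    push_cast
    rfl
  have hS : S ≤ ‖φ‖ * ‖w‖ := by
    have := φ.le_opNorm w
    rwa [hφw, RCLike.norm_ofReal, abs_of_nonneg (by positivity)] at this
  nlinarith [norm_nonneg w, norm_nonneg φ, sq_nonneg (‖w‖ - ‖φ‖)]

lemma eq_of_forall_mul_le_mul_sq_add_mul {K b s : ℝ} (h : ∀ t : ℝ, s * t ≤ K * t ^ 2 + b * t) :
    s = b := by
  have := discrim_le_zero (a := K) (b := b - s) (c := 0) fun t => by nlinarith [h t]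
  rw [discrim] at this
  nlinarith [sq_nonneg (b - s)]

lemma orthonormal_eVec : Orthonormal ℝ eVec := by
  have h := (default : HilbertBasis ℕ ℝ ell2).orthonormal
  rw [orthonormal_iff_ite] at h ⊢
  intro i j
  simpa [Submodule.coe_inner, eVec, ← HilbertBasis.repr_symm_single] using h i j

lemma summable_fSeq_zero_terms :
    Summable fun n : ℕ => ((n : ℝ) + 1) ^ 2 / 2 * (0 - (((n : ℝ) + 1) ^ 2)⁻¹) ^ 2 := by
  have h := (summable_nat_add_iff 1).2 (Real.summable_one_div_nat_pow.2 one_lt_two)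
  refine (h.mul_left (1 / 2)).congr fun n => ?_
  push_cast
  field_simp
  ring

lemma fSeq_single (N : ℕ) (t : ℝ) :
    fSeq (Pi.single N t) = fSeq 0 + (((N : ℝ) + 1) ^ 2 / 2 * t ^ 2 - t) := by
  have hterms : (fun n : ℕ => ((n : ℝ) + 1) ^ 2 / 2 *
      (Pi.single (M := fun _ => ℝ) N t n - (((n : ℝ) + 1) ^ 2)⁻¹) ^ 2) =
      fun n : ℕ => ((n : ℝ) + 1) ^ 2 / 2 * (0 - (((n : ℝ) + 1) ^ 2)⁻¹) ^ 2 +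
        Pi.single (M := fun _ => ℝ) N (((N : ℝ) + 1) ^ 2 / 2 * t ^ 2 - t) n := by
    funext n
    rcases eq_or_ne n N with rfl | hn
    · simp only [Pi.single_eq_same]
      field_simp
      ring
    · simp [Pi.single_eq_of_ne hn]
  rw [fSeq, hterms, Summable.tsum_add summable_fSeq_zero_terms (hasSum_pi_single _ _).summable,
    tsum_pi_single]
  rfl

lemma seqOf_smul_eVec (t : ℝ) (N : ℕ) : seqOf (t • eVec N) = Pi.single N t := by
  funext n
  simp [seqOf, eVec, lp.single_apply, Pi.single_apply]

lemma fcc_smul_eVec (t : ℝ) (N : ℕ) :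
    fcc (t • eVec N) = fcc 0 + (((N : ℝ) + 1) ^ 2 / 2 * t ^ 2 - t) := by
  have h0 : seqOf 0 = 0 := by simpa using seqOf_smul_eVec 0 0
  rw [fcc, fcc, seqOf_smul_eVec, h0, fSeq_single]

lemma apply_eVec_eq_neg_one_of_subgradient {φ : cc →L[ℝ] ℝ}
    (hφ : ∀ y, fcc 0 + φ y ≤ fcc y) (N : ℕ) : φ (eVec N) = -1 :=
  eq_of_forall_mul_le_mul_sq_add_mul (K := ((N : ℝ) + 1) ^ 2 / 2) fun t => by
    have := hφ (t • eVec N)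
    rw [fcc_smul_eVec, map_smul, smul_eq_mul] at this
    linarith

lemma not_subgradient_fcc_zero (φ : cc →L[ℝ] ℝ) : ¬ ∀ y, fcc 0 + φ y ≤ fcc y := by
  intro hφ
  obtain ⟨k, hk⟩ := exists_nat_gt (‖φ‖ ^ 2)
  have := orthonormal_eVec.sum_norm_sq_apply_le_opNorm_sq φ (Finset.range k)
  simp only [apply_eVec_eq_neg_one_of_subgradient hφ, norm_neg, norm_one, one_pow,
    Finset.sum_const, Finset.card_range, nsmul_eq_mul, mul_one] at this
  linarith

/-- the sum rule fails: `∂(f + δ_{{0}})(0)` is the whole (nonempty)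
dual space, while `∂f(0) + ∂δ_{{0}}(0) = ∅`, although
`0 ∈ core (dom f - dom δ_{{0}})`. -/
theorem sum_rule_fails :
    {xs : cc →L[ℝ] ℝ | ∀ y : cc,
      (fcc y : EReal) + gind y ≥ (fcc 0 : EReal) + gind 0 + ((xs (y - 0) : ℝ) : EReal)}
      = Set.univ ∧
    (Set.univ : Set (cc →L[ℝ] ℝ)).Nonempty ∧
    {z : cc →L[ℝ] ℝ |
      ∃ a ∈ {xs : cc →L[ℝ] ℝ | ∀ y : cc, fcc y ≥ fcc 0 + xs (y - 0)},
      ∃ b ∈ {xs : cc →L[ℝ] ℝ | ∀ y : cc,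
        gind y ≥ gind 0 + ((xs (y - 0) : ℝ) : EReal)},
      z = a + b} = ∅ ∧
    (∀ v : cc, ∃ ε > (0 : ℝ), ∀ t : ℝ, |t| < ε →
      t • v ∈ {d : cc | ∃ a ∈ (Set.univ : Set cc), ∃ b ∈ ({0} : Set cc), d = a - b}) := by
  refine ⟨?_, Set.univ_nonempty, ?_, fun v => ⟨1, one_pos, fun t _ => ?_⟩⟩
  · refine Set.eq_univ_of_forall fun φ y => ?_
    by_cases hy : y = 0
    · simp [hy, gind]
    · simp [hy, gind, EReal.add_top_of_ne_bot (EReal.coe_ne_bot _)]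
  · refine Set.eq_empty_of_forall_notMem ?_
    rintro _ ⟨a, ha, b, -, rfl⟩
    exact not_subgradient_fcc_zero a fun y => by simpa using ha y
  · exact ⟨t • v, Set.mem_univ _, 0, rfl, (sub_zero _).symm⟩
end
end

section
/- The Fenchel conjugate of f : c_c → ℝ, f(x) = Σ_{n=1}^∞ (n²/2)(x_n − n^{-2})², identified on the dual ℓ², satisfies f*(y) = Σ_{n=1}^∞ n^{-2} ( (1/2) y_n² + y_n ) for all y ∈ ℓ². -/
open scoped ENNReal

noncomputable section

namespace FenchelAux

def aR (n : ℕ) : ℝ := ((n : ℝ) + 1) ^ 2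

lemma aR_pos (n : ℕ) : 0 < aR n := by unfold aR; positivity

lemma one_le_aR (n : ℕ) : 1 ≤ aR n := by
  have h : (1:ℝ) ≤ (n:ℝ) + 1 := by
    have := Nat.cast_nonneg (α := ℝ) n; linarith
  have := one_le_pow₀ (n := 2) h
  simpa [aR] using this

lemma inv_aR_le_one (n : ℕ) : (aR n)⁻¹ ≤ 1 :=
  inv_le_one_of_one_le₀ (one_le_aR n)

def g2 (x : ℕ → ℝ) (n : ℕ) : ℝ := (aR n / 2) * (x n - (aR n)⁻¹) ^ 2

def cT (y : ℕ → ℝ) (n : ℕ) : ℝ := (aR n)⁻¹ * ((1/2) * (y n)^2 + y n)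

lemma fSeq_eq (x : ℕ → ℝ) : fSeq x = ∑' n, g2 x n := rfl

lemma fstar_eq (y : ell2) : fstar y = ∑' n, cT (y : ℕ → ℝ) n := rfl

lemma sum_inv_aR : Summable fun n : ℕ => (aR n)⁻¹ := by
  have h : Summable fun n : ℕ => ((n : ℝ) ^ 2)⁻¹ := by
    exact (Real.summable_one_div_nat_pow.mpr one_lt_two).congr fun n => by rw [one_div]
  have h2 := (summable_nat_add_iff 1).mpr h
  refine h2.congr fun n => ?_
  push_cast
  simp [aR]

lemma sum_inv_two_aR : Summable fun n : ℕ => (2 * aR n)⁻¹ := by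
  simpa [mul_inv, mul_comm] using sum_inv_aR.mul_left (2:ℝ)⁻¹

lemma sum_sq (y : ell2) : Summable fun n => ((y : ℕ → ℝ) n)^2 := by
  have h := (lp.memℓp y).summable (p := 2) (by norm_num)
  refine h.congr fun n => ?_
  have : ((2:ℝ≥0∞)).toReal = (2:ℝ) := by norm_num
  rw [this, Real.rpow_two, Real.norm_eq_abs, sq_abs]

lemma sum_cT (y : ell2) : Summable (cT (y : ℕ → ℝ)) := by
  have h1 : Summable fun n => (aR n)⁻¹ * ((1/2) * ((y:ℕ→ℝ) n)^2) := by
    refine Summable.of_nonneg_of_le (fun n => ?_) (fun n => ?_) ((sum_sq y).mul_left (1/2))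
    · exact mul_nonneg (inv_nonneg.mpr (aR_pos n).le) (by positivity)
    · have h01 : (0:ℝ) ≤ (1/2) * ((y:ℕ→ℝ) n)^2 := by positivity
      calc (aR n)⁻¹ * ((1/2) * ((y:ℕ→ℝ) n)^2) ≤ 1 * ((1/2) * ((y:ℕ→ℝ) n)^2) :=
            mul_le_mul_of_nonneg_right (inv_aR_le_one n) h01
        _ = (1/2) * ((y:ℕ→ℝ) n)^2 := by ring
  have h2 : Summable fun n => (aR n)⁻¹ * (y:ℕ→ℝ) n := by
    refine Summable.of_abs ?_
    refine Summable.of_nonneg_of_le (fun n => abs_nonneg _) (fun n => ?_)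
      (((sum_sq y).add sum_inv_aR).mul_left (1/2))
    have ha := aR_pos n
    have hai : (0:ℝ) < (aR n)⁻¹ := inv_pos.mpr ha
    have h1' : (aR n)⁻¹ ≤ 1 := inv_aR_le_one n
    have habs : |(aR n)⁻¹ * (y:ℕ→ℝ) n| = (aR n)⁻¹ * |(y:ℕ→ℝ) n| := by
      rw [abs_mul, abs_of_pos hai]
    rw [habs]
    have hsq : ((y:ℕ→ℝ) n)^2 = |(y:ℕ→ℝ) n|^2 := (sq_abs _).symm
    nlinarith [sq_nonneg ((aR n)⁻¹ - |(y:ℕ→ℝ) n|), abs_nonneg ((y:ℕ→ℝ) n)]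
  refine (h1.add h2).congr fun n => ?_
  simp [cT]; ring

lemma g2_of_zero {x : ℕ → ℝ} {n : ℕ} (h : x n = 0) : g2 x n = (2 * aR n)⁻¹ := by
  have ha := (aR_pos n).ne'
  simp only [g2, h]
  field_simp
  ring

lemma sum_g2 {x : ℕ → ℝ} (h : (Function.support x).Finite) : Summable (g2 x) := by
  have hfin : Summable fun n => g2 x n - (2 * aR n)⁻¹ := by
    apply summable_of_finite_support
    refine h.subset ?_
    intro n hn
    simp only [Function.mem_support] at hn ⊢
    intro h0
    exact hn (by rw [g2_of_zero h0, sub_self])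
  have := hfin.add sum_inv_two_aR
  refine this.congr fun n => ?_
  ring

lemma term_le (n : ℕ) (y x : ℝ) :
    y * x - (aR n / 2) * (x - (aR n)⁻¹)^2 ≤ (aR n)⁻¹ * ((1/2)*y^2 + y) := by
  have ha := aR_pos n
  have hane := ha.ne'
  have key : (aR n)⁻¹ * ((1/2)*y^2 + y) - (y * x - (aR n / 2) * (x - (aR n)⁻¹)^2)
      = (aR n / 2) * (x - (1 + y)/aR n)^2 := by
    field_simp
    ring
  nlinarith [mul_nonneg (by linarith : (0:ℝ) ≤ aR n / 2) (sq_nonneg (x - (1 + y)/aR n))]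

lemma support_seqOf (x : cc) : (Function.support (seqOf x)).Finite := x.2

lemma sum_g1 (y : ell2) (x : cc) : Summable fun n => (y:ℕ→ℝ) n * seqOf x n := by
  apply summable_of_finite_support
  refine (support_seqOf x).subset ?_
  intro n hn
  simp only [Function.mem_support] at hn ⊢
  intro h0
  exact hn (by rw [h0, mul_zero])

lemma value_eq (y : ell2) (x : cc) :
    (∑' n, (y:ℕ→ℝ) n * seqOf x n) - fcc x
      = ∑' n, ((y:ℕ→ℝ) n * seqOf x n - g2 (seqOf x) n) := by
  rw [Summable.tsum_sub (sum_g1 y x) (sum_g2 (support_seqOf x))]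
  rfl

def xseq (y : ell2) (N : ℕ) : ℕ → ℝ :=
  fun n => if n < N then (1 + (y:ℕ→ℝ) n) / aR n else 0

lemma supp_xseq (y : ell2) (N : ℕ) : (Function.support (xseq y N)).Finite := by
  refine (Set.finite_Iio N).subset ?_
  intro n hn
  simp only [Function.mem_support, xseq] at hn
  by_contra h
  simp only [Set.mem_Iio, not_lt] at h
  exact hn (by rw [if_neg (not_lt.mpr h)])

def xcc (y : ell2) (N : ℕ) : cc :=
  ⟨⟨xseq y N, memℓp_of_finite_support (supp_xseq y N)⟩,
    mem_ccSubmodule_of_mk _ (supp_xseq y N)⟩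

lemma seqOf_xcc (y : ell2) (N : ℕ) : seqOf (xcc y N) = xseq y N := rfl

lemma term_xcc (y : ell2) (N n : ℕ) :
    (y:ℕ→ℝ) n * xseq y N n - g2 (xseq y N) n
      = (if n < N then cT (y:ℕ→ℝ) n + (2 * aR n)⁻¹ else 0) - (2 * aR n)⁻¹ := by
  have ha := (aR_pos n).ne'
  by_cases h : n < N
  · simp only [xseq, g2, cT, if_pos h]
    field_simp
    ring
  · simp only [xseq, g2, cT, if_neg h]
    field_simp
    ring

lemma tendsto_vals (y : ell2) :
    Filter.Tendsto (fun N => (∑' n, (y:ℕ→ℝ) n * seqOf (xcc y N) n) - fcc (xcc y N))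
      Filter.atTop (nhds (fstar y)) := by
  have hval : ∀ N, (∑' n, (y:ℕ→ℝ) n * seqOf (xcc y N) n) - fcc (xcc y N)
      = (∑ n ∈ Finset.range N, (cT (y:ℕ→ℝ) n + (2 * aR n)⁻¹)) - ∑' n, (2 * aR n)⁻¹ := by
    intro N
    rw [value_eq, seqOf_xcc]
    have h1 : Summable fun n => (if n < N then cT (y:ℕ→ℝ) n + (2 * aR n)⁻¹ else 0) := by
      apply summable_of_finite_support
      refine (Set.finite_Iio N).subset ?_
      intro n hn
      simp only [Function.mem_support] at hn
      by_contra h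
      simp only [Set.mem_Iio, not_lt] at h
      exact hn (if_neg (not_lt.mpr h))
    calc ∑' n, ((y:ℕ→ℝ) n * xseq y N n - g2 (xseq y N) n)
        = ∑' n, ((if n < N then cT (y:ℕ→ℝ) n + (2 * aR n)⁻¹ else 0) - (2 * aR n)⁻¹) := by
          exact tsum_congr (term_xcc y N)
      _ = (∑' n, (if n < N then cT (y:ℕ→ℝ) n + (2 * aR n)⁻¹ else 0)) - ∑' n, (2 * aR n)⁻¹ :=
          Summable.tsum_sub h1 sum_inv_two_aR
      _ = (∑ n ∈ Finset.range N, (cT (y:ℕ→ℝ) n + (2 * aR n)⁻¹)) - ∑' n, (2 * aR n)⁻¹ := by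
          congr 1
          rw [tsum_eq_sum (s := Finset.range N)]
          · exact Finset.sum_congr rfl fun n hn => if_pos (Finset.mem_range.mp hn)
          · intro n hn
            exact if_neg (fun h => hn (Finset.mem_range.mpr h))
  simp only [hval]
  have h1 : Filter.Tendsto (fun N => ∑ n ∈ Finset.range N, (cT (y:ℕ→ℝ) n + (2 * aR n)⁻¹))
      Filter.atTop (nhds ((∑' n, cT (y:ℕ→ℝ) n) + ∑' n, (2 * aR n)⁻¹)) := by
    have := ((sum_cT y).add sum_inv_two_aR).hasSum.tendsto_sum_nat
    rwa [Summable.tsum_add (sum_cT y) sum_inv_two_aR] at this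
  have h2 := h1.sub_const (∑' n, (2 * aR n)⁻¹)
  rw [fstar_eq]
  simpa using h2

end FenchelAux
/-- the Fenchel conjugate of `f`, computed on the dual `ℓ²`
via the pairing `⟨y, x⟩ = ∑ yₙ xₙ`, is `f*(y) = ∑ n⁻² (y_n²/2 + y_n)`. -/
theorem fenchel_conjugate_formula (y : ell2) :
    IsLUB {r : ℝ | ∃ x : cc, r = (∑' n : ℕ, (y : ℕ → ℝ) n * seqOf x n) - fcc x}
      (fstar y) := by
  open FenchelAux in
  constructor
  · rintro r ⟨x, rfl⟩
    rw [value_eq, fstar_eq]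
    refine Summable.tsum_le_tsum (fun n => ?_) ((sum_g1 y x).sub (sum_g2 (support_seqOf x)))
      (sum_cT y)
    exact term_le n _ _
  · intro b hb
    refine le_of_tendsto' (tendsto_vals y) fun N => hb ⟨xcc y N, rfl⟩
end
end

section
/- The point 0 is a global minimizer of f∘A on c_c, with minimal value f(A0) = f(0) = (1/2) Σ_{n=1}^∞ n^{-2} = π²/12. -/
open scoped ENNReal

noncomputable section

/-! Completing the square, `f(y) = f(0) + ∑ (n²/2) y_n² - ∑ y_n` for finitely supported `y`.
For `y = A x` the linear part `∑ (A x)_n` telescopes to `0`, so `f(A x) ≥ f(0) = f(A 0)`. -/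

lemma hasSum_inv_succ_sq : HasSum (fun n : ℕ => (((n : ℝ) + 1) ^ 2)⁻¹) (Real.pi ^ 2 / 6) := by
  have h := (hasSum_nat_add_iff' (f := fun n : ℕ => (1 : ℝ) / (n : ℝ) ^ 2) 1).2 hasSum_zeta_two
  simpa using h

lemma exists_forall_ge_eq_zero_of_support_finite {M : Type*} [Zero M] {u : ℕ → M}
    (h : (Function.support u).Finite) : ∃ N, ∀ n ≥ N, u n = 0 := by
  have hu : ∀ᶠ n in Filter.cofinite, u n = 0 := Filter.eventually_cofinite.2 h
  rwa [Nat.cofinite_eq_atTop, Filter.eventually_atTop] at hu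

lemma sum_range_succ_Aseq (u : ℕ → ℝ) (N : ℕ) :
    ∑ n ∈ Finset.range (N + 1), Aseq u n = u N := by
  induction N with
  | zero => simp [Aseq]
  | succ N ih => rw [Finset.sum_range_succ, ih]; simp [Aseq]

lemma Aseq_eq_zero_of_forall_ge {u : ℕ → ℝ} {N : ℕ} (hu : ∀ n ≥ N, u n = 0) :
    ∀ n ≥ N + 1, Aseq u n = 0 := by
  intro n hn
  simp [Aseq, hu n (by omega), hu (n - 1) (by omega)]

lemma Aseq_zero : Aseq 0 = 0 := by
  funext n
  simp [Aseq]

lemma seqOf_zero : seqOf 0 = 0 := by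
  funext n
  simp [seqOf]

lemma seqOf_Aop (x : cc) : seqOf (Aop x) = Aseq (seqOf x) := rfl

lemma mul_sq_sub_inv_eq (w y : ℝ) (hw : w ≠ 0) :
    w / 2 * (y - w⁻¹) ^ 2 = 1 / 2 * w⁻¹ + (w / 2 * y ^ 2 - y) := by
  field_simp
  ring

lemma fSeq_zero : fSeq 0 = 1 / 2 * ∑' n : ℕ, (((n : ℝ) + 1) ^ 2)⁻¹ := by
  rw [fSeq, ← tsum_mul_left]
  refine tsum_congr fun n => ?_
  simpa using mul_sq_sub_inv_eq (((n : ℝ) + 1) ^ 2) 0 (by positivity)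

lemma fSeq_eq_fSeq_zero_add {y : ℕ → ℝ} {N : ℕ} (hy : ∀ n ≥ N, y n = 0) :
    fSeq y = fSeq 0 +
      ∑ n ∈ Finset.range N, ((((n : ℝ) + 1) ^ 2 / 2) * y n ^ 2 - y n) := by
  set g : ℕ → ℝ := fun n => (((n : ℝ) + 1) ^ 2 / 2) * y n ^ 2 - y n
  have hg : ∀ n ∉ Finset.range N, g n = 0 := fun n hn => by
    simp [g, hy n (by simpa using hn)]
  have hsplit : ∀ n : ℕ, (((n : ℝ) + 1) ^ 2 / 2) * (y n - (((n : ℝ) + 1) ^ 2)⁻¹) ^ 2 =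
      1 / 2 * (((n : ℝ) + 1) ^ 2)⁻¹ + g n := fun n =>
    mul_sq_sub_inv_eq _ _ (by positivity)
  rw [fSeq, tsum_congr hsplit, Summable.tsum_add (hasSum_inv_succ_sq.summable.mul_left _)
    (summable_of_ne_finset_zero hg), tsum_mul_left, tsum_eq_sum hg, fSeq_zero]

lemma fSeq_zero_le_of_sum_eq_zero {y : ℕ → ℝ} {N : ℕ} (hy : ∀ n ≥ N, y n = 0)
    (hsum : ∑ n ∈ Finset.range N, y n = 0) : fSeq 0 ≤ fSeq y := by
  rw [fSeq_eq_fSeq_zero_add hy, Finset.sum_sub_distrib, hsum, sub_zero, le_add_iff_nonneg_right]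
  exact Finset.sum_nonneg fun n _ => by positivity

/-- `0` is a global minimizer of `f ∘ A`, with minimal value
`f(A0) = f(0) = (1/2) ∑ n⁻² = π²/12`. -/
theorem zero_minimizes_f_comp_A :
    (∀ x : cc, fcc (Aop 0) ≤ fcc (Aop x)) ∧
    fcc (Aop 0) = fcc 0 ∧
    fcc 0 = (1 / 2) * ∑' n : ℕ, (((n : ℝ) + 1) ^ 2)⁻¹ ∧
    fcc 0 = Real.pi ^ 2 / 12 := by
  have hA0 : fcc (Aop 0) = fcc 0 := by
    simp only [fcc, seqOf_Aop, seqOf_zero, Aseq_zero]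
  have h0 : fcc 0 = (1 / 2) * ∑' n : ℕ, (((n : ℝ) + 1) ^ 2)⁻¹ := by
    rw [fcc, seqOf_zero, fSeq_zero]
  refine ⟨fun x => ?_, hA0, h0, by rw [h0, hasSum_inv_succ_sq.tsum_eq]; ring⟩
  obtain ⟨N, hN⟩ := exists_forall_ge_eq_zero_of_support_finite x.2
  rw [hA0, fcc, fcc, seqOf_Aop, seqOf_zero]
  exact fSeq_zero_le_of_sum_eq_zero (Aseq_eq_zero_of_forall_ge hN)
    ((sum_range_succ_Aseq _ N).trans (hN N le_rfl))
end
end
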